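/- The MTL formula F_{=1} true (there exists a strictly later position whose data value is exactly one more than the current one) is not definable in TPTL^eq, the fragment of TPTL in which all register constraints are equalities x ∈ [0,0]. -/

import Mathlib

/-- Integers extended with `-∞` (`⊥`) and `+∞` (`⊤`), used as interval endpoints. -/
abbrev EIntX := WithBot (WithTop ℤ)

def EIntX.ofInt (n : ℤ) : EIntX := ((n : WithTop ℤ) : EIntX)

/-- An interval of integers, given by two (possibly infinite) endpoints and
openness flags. -/
structure Iv where
  lo : EIntX
  hi : EIntX
  loOpen : Bool
  hiOpen : Bool

/-- Membership of an integer in an interval. -/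
def Iv.mem (I : Iv) (d : ℤ) : Prop :=
  (if I.loOpen then I.lo < EIntX.ofInt d else I.lo ≤ EIntX.ofInt d) ∧
  (if I.hiOpen then EIntX.ofInt d < I.hi else EIntX.ofInt d ≤ I.hi)

/-- The interval `(-∞, +∞)`. -/
def Iv.univ : Iv := ⟨⊥, ⊤, true, true⟩

/-- The singleton interval `[n, n]`. -/
def Iv.pt (n : ℤ) : Iv := ⟨EIntX.ofInt n, EIntX.ofInt n, false, false⟩

/-- A data word: an infinite sequence of pairs of a set of propositions and a
natural number data value. -/
abbrev DataWord (P : Type) := ℕ → (Set P) × ℕ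

/-- Syntax of MTL: atoms, negation, conjunction, and interval-constrained
strict until. -/
inductive MTL (P : Type) where
  | atom : P → MTL P
  | neg  : MTL P → MTL P
  | and  : MTL P → MTL P → MTL P
  | untl : MTL P → Iv → MTL P → MTL P

/-- Satisfaction of an MTL formula at position `i` of data word `w`. -/
def MTL.sat {P : Type} (w : DataWord P) : ℕ → MTL P → Prop
  | i, .atom p => p ∈ (w i).1
  | i, .neg φ => ¬ MTL.sat w i φ
  | i, .and φ ψ => MTL.sat w i φ ∧ MTL.sat w i ψ
  | i, .untl φ I ψ => ∃ j, i < j ∧ MTL.sat w j ψ ∧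
      I.mem (((w j).2 : ℤ) - ((w i).2 : ℤ)) ∧
      ∀ k, i < k → k < j → MTL.sat w k φ

/-- A data word satisfies an MTL formula if it holds at position `0`. -/
def MTL.models {P : Type} (w : DataWord P) (φ : MTL P) : Prop := MTL.sat w 0 φ

/-- The until rank of an MTL formula. -/
def MTL.urk {P : Type} : MTL P → ℕ
  | .atom _ => 0
  | .neg φ => φ.urk
  | .and φ ψ => max φ.urk ψ.urk
  | .untl φ _ ψ => max φ.urk ψ.urk + 1

/-- All interval endpoints of until operators in the formula lie in `S`. -/
def MTL.endpointsIn {P : Type} : MTL P → Set EIntX → Prop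
  | .atom _, _ => True
  | .neg φ, S => φ.endpointsIn S
  | .and φ ψ, S => φ.endpointsIn S ∧ ψ.endpointsIn S
  | .untl φ I ψ, S => I.lo ∈ S ∧ I.hi ∈ S ∧ φ.endpointsIn S ∧ ψ.endpointsIn S

/-- Syntax of TPTL: atoms, register constraints, negation, conjunction,
strict until, and the freeze quantifier. -/
inductive TPTL (P V : Type) where
  | atom : P → TPTL P V
  | cstr : V → Iv → TPTL P V
  | neg : TPTL P V → TPTL P V
  | and : TPTL P V → TPTL P V → TPTL P V
  | untl : TPTL P V → TPTL P V → TPTL P V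
  | freeze : V → TPTL P V → TPTL P V

/-- Satisfaction of a TPTL formula at position `i` of data word `w` under the
register valuation `ν`. -/
def TPTL.sat {P V : Type} [DecidableEq V] (w : DataWord P) :
    ℕ → (V → ℕ) → TPTL P V → Prop
  | i, _, .atom p => p ∈ (w i).1
  | i, ν, .cstr x I => I.mem (((w i).2 : ℤ) - (ν x : ℤ))
  | i, ν, .neg φ => ¬ TPTL.sat w i ν φ
  | i, ν, .and φ ψ => TPTL.sat w i ν φ ∧ TPTL.sat w i ν ψ
  | i, ν, .untl φ ψ => ∃ j, i < j ∧ TPTL.sat w j ν ψ ∧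
      ∀ k, i < k → k < j → TPTL.sat w k ν φ
  | i, ν, .freeze x φ => TPTL.sat w i (Function.update ν x (w i).2) φ

/-- A data word satisfies a TPTL formula if it holds at position `0` under the
valuation mapping every register to the first data value. -/
def TPTL.models {P V : Type} [DecidableEq V] (w : DataWord P) (φ : TPTL P V) : Prop :=
  TPTL.sat w 0 (fun _ => (w 0).2) φ

/-- The until rank of a TPTL formula. -/
def TPTL.urk {P V : Type} : TPTL P V → ℕ
  | .atom _ => 0
  | .cstr _ _ => 0
  | .neg φ => φ.urk
  | .and φ ψ => max φ.urk ψ.urk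
  | .untl φ ψ => max φ.urk ψ.urk + 1
  | .freeze _ φ => φ.urk

/-- All register constraints in the formula are equality tests `x ∈ [0,0]`. -/
def TPTL.eqOnly {P V : Type} : TPTL P V → Prop
  | .atom _ => True
  | .cstr _ I => I = Iv.pt 0
  | .neg φ => φ.eqOnly
  | .and φ ψ => φ.eqOnly ∧ ψ.eqOnly
  | .untl φ ψ => φ.eqOnly ∧ ψ.eqOnly
  | .freeze _ φ => φ.eqOnly

/-- All endpoints of intervals in register constraints lie in `S`. -/
def TPTL.cstrIn {P V : Type} : TPTL P V → Set EIntX → Prop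
  | .atom _, _ => True
  | .cstr _ I, S => I.lo ∈ S ∧ I.hi ∈ S
  | .neg φ, S => φ.cstrIn S
  | .and φ ψ, S => φ.cstrIn S ∧ ψ.cstrIn S
  | .untl φ ψ, S => φ.cstrIn S ∧ ψ.cstrIn S
  | .freeze _ φ, S => φ.cstrIn S

/-- An MTL truth constant over `Bool`. -/
def mttB : MTL Bool := .neg (.and (.atom true) (.neg (.atom true)))

/-- The MTL formula `F_{=1} true`: some strictly later position has data value
exactly one more than the current one. -/
def Feq1 : MTL Bool := .untl mttB (Iv.pt 1) mttB


/-!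
Equality constraints only ever compare data values with each other, so satisfaction of a
`TPTL^eq` formula is invariant under any injective renaming of data values. Doubling every
data value maps the word with data `0, 1, 2, …`, which satisfies `F_{=1} true`, to the word
with data `0, 2, 4, …`, which does not.
-/

open Function

lemma Iv.mem_pt (n d : ℤ) : (Iv.pt n).mem d ↔ d = n := by
  simp only [Iv.pt, Iv.mem, EIntX.ofInt, Bool.false_eq_true, if_false, WithBot.coe_le_coe,
    WithTop.coe_le_coe]
  omega

def DataWord.mapData {P : Type} (f : ℕ → ℕ) (w : DataWord P) : DataWord P :=
  fun i => ((w i).1, f (w i).2)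

namespace TPTL

variable {P V : Type} [DecidableEq V]

lemma sat_cstr_pt_zero (w : DataWord P) (i : ℕ) (ν : V → ℕ) (x : V) :
    TPTL.sat w i ν (.cstr x (Iv.pt 0)) ↔ (w i).2 = ν x := by
  simp only [TPTL.sat, Iv.mem_pt]
  omega

theorem sat_mapData_iff {f : ℕ → ℕ} (hf : Injective f) (w : DataWord P) {φ : TPTL P V}
    (hφ : φ.eqOnly) (i : ℕ) (ν : V → ℕ) :
    TPTL.sat (w.mapData f) i (f ∘ ν) φ ↔ TPTL.sat w i ν φ := by
  induction φ generalizing i ν with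
  | atom p => rfl
  | cstr x I =>
    obtain rfl : I = Iv.pt 0 := hφ
    simp only [sat_cstr_pt_zero, DataWord.mapData, comp_apply, hf.eq_iff]
  | neg φ ih => exact not_congr (ih hφ i ν)
  | and φ ψ ihφ ihψ => exact and_congr (ihφ hφ.1 i ν) (ihψ hφ.2 i ν)
  | untl φ ψ ihφ ihψ =>
    simp only [TPTL.sat, ihφ hφ.1, ihψ hφ.2]
  | freeze x φ ih =>
    simp only [TPTL.sat, DataWord.mapData, ← comp_update, ih hφ]

theorem models_mapData_iff {f : ℕ → ℕ} (hf : Injective f) (w : DataWord P) {φ : TPTL P V}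
    (hφ : φ.eqOnly) : TPTL.models (w.mapData f) φ ↔ TPTL.models w φ :=
  sat_mapData_iff hf w hφ 0 _

end TPTL

lemma MTL.sat_mttB (w : DataWord Bool) (i : ℕ) : MTL.sat w i mttB := by
  simp [mttB, MTL.sat]

lemma MTL.sat_Feq1_iff (w : DataWord Bool) (i : ℕ) :
    MTL.sat w i Feq1 ↔ ∃ j, i < j ∧ (w j).2 = (w i).2 + 1 := by
  rw [Feq1, MTL.sat]
  refine exists_congr fun j => and_congr_right fun _ => ?_
  simp only [MTL.sat_mttB, Iv.mem_pt, true_and, implies_true, and_true]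
  omega

/-- `F_{=1} true` is not definable in `TPTL^eq`, the fragment of TPTL where
all register constraints are equalities `x ∈ [0,0]`. -/
theorem Feq1_not_tptleq_definable :
    ¬ ∃ ψ : TPTL Bool ℕ, TPTL.eqOnly ψ ∧
        ∀ w : DataWord Bool, TPTL.models w ψ ↔ MTL.models w Feq1 := by
  rintro ⟨ψ, hψ, hdef⟩
  let w : DataWord Bool := fun i => (∅, i)
  have hw : MTL.models w Feq1 := (MTL.sat_Feq1_iff w 0).2 ⟨1, Nat.one_pos, rfl⟩
  have hw₂ : ¬ MTL.models (w.mapData (2 * ·)) Feq1 := by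
    intro h
    obtain ⟨j, -, hj⟩ := (MTL.sat_Feq1_iff _ 0).1 h
    simp only [w, DataWord.mapData] at hj
    omega
  have hdouble : TPTL.models (w.mapData (2 * ·)) ψ ↔ TPTL.models w ψ :=
    TPTL.models_mapData_iff (mul_right_injective₀ two_ne_zero) w hψ
  exact hw₂ ((hdef _).1 (hdouble.2 ((hdef w).2 hw)))
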